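/- Let A, B ⊆ ℝ^d = ℝ × ℝ^{d-1} be compact sets, t ∈ (0,1), and S = tA + (1-t)B. Then for any λ > 0 and γ, γ̃ > 0 with γ^t γ̃^{1-t} = 1, |{x ∈ ℝ : |S_x| > λ}| ≥ t·|{x : |A_x| > γλ}| + (1-t)·|{x : |B_x| > γ̃λ}| whenever both sets on the right are nonempty. -/

import Mathlib

/-!
Writing `S = t • A + (1 - t) • B`, the slice of `S` over `t x + (1 - t) x'` contains
`t • A_x + (1 - t) • B_x'`, so by the multiplicative Brunn–Minkowski inequality in the fibre,
`|A_x| > a` and `|B_x'| > b` force `|S_{t x + (1 - t) x'}| > a ^ t b ^ (1 - t)`. Hence the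
superlevel set of `S` contains the Minkowski combination of those of `A` and `B`, and the
one-dimensional inequality `|U| + |V| ≤ |U + V|` gives the claim with `a = γλ`, `b = γ̃λ`.

The fibre inequality is itself proved by induction on the dimension from the same statement:
normalising the slice-measure functions of two compact sets by their suprema, integrating the
superlevel inequality over all levels (layer cake) and applying weighted AM–GM yields
Brunn–Minkowski one dimension up.
-/

open MeasureTheory Set
open scoped Pointwise ENNReal

theorem IsCompact.volume_add_volume_le {K L : Set ℝ} (hK : IsCompact K) (hL : IsCompact L)
    (hK₀ : K.Nonempty) (hL₀ : L.Nonempty) : volume K + volume L ≤ volume (K + L) := by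
  set a := sSup K
  set b := sInf L
  -- `K + b` and `a + L` lie in `K + L` and meet only in `a + b`
  have hmeet : volume ((· + b) '' K ∩ (a + ·) '' L) = 0 := by
    refine measure_mono_null ?_ (measure_singleton (a + b))
    rintro _ ⟨⟨k, hk, rfl⟩, l, hl, hkl⟩
    have := le_csSup hK.bddAbove hk
    have := csInf_le hL.bddBelow hl
    simp only [mem_singleton_iff] at hkl ⊢
    linarith
  calc volume K + volume L = volume ((· + b) '' K) + volume ((a + ·) '' L) := by
        rw [image_add_right, measure_preimage_add_right, image_add_left, measure_preimage_add]
    _ = volume ((· + b) '' K ∪ (a + ·) '' L) :=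
        (measure_union₀ (hL.image (continuous_const_add a)).measurableSet.nullMeasurableSet
          hmeet).symm
    _ ≤ volume (K + L) := by
        refine measure_mono (union_subset ?_ ?_)
        · exact image_subset_iff.2 fun k hk => add_mem_add hk (hL.sInf_mem hL₀)
        · exact image_subset_iff.2 fun l hl => add_mem_add (hK.sSup_mem hK₀) hl

theorem MeasurableSet.volume_add_volume_le {U V : Set ℝ} (hU : MeasurableSet U)
    (hV : MeasurableSet V) (hU₀ : U.Nonempty) (hV₀ : V.Nonempty) :
    volume U + volume V ≤ volume (U + V) := by
  obtain ⟨u, hu⟩ := hU₀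
  obtain ⟨v, hv⟩ := hV₀
  rw [hU.measure_eq_iSup_isCompact, hV.measure_eq_iSup_isCompact]
  simp only [iSup_and']
  refine ENNReal.biSup_add_biSup_le' ⟨∅, empty_subset _, isCompact_empty⟩
    ⟨∅, empty_subset _, isCompact_empty⟩ fun K ⟨hKU, hK⟩ L ⟨hLV, hL⟩ => ?_
  -- adding a point makes the compact sets nonempty without leaving `U` and `V`
  calc volume K + volume L ≤ volume (insert u K) + volume (insert v L) := by
        gcongr <;> exact subset_insert _ _
    _ ≤ volume (insert u K + insert v L) :=
        (hK.insert u).volume_add_volume_le (hL.insert v) (insert_nonempty u K)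
          (insert_nonempty v L)
    _ ≤ volume (U + V) :=
        measure_mono (add_subset_add (insert_subset hu hKU) (insert_subset hv hLV))

theorem Real.mul_rpow_mul_mul_rpow_one_sub {a b s : ℝ} (ha : 0 ≤ a) (hb : 0 ≤ b) (hs : 0 < s)
    (t : ℝ) :
    (a * s) ^ t * (b * s) ^ (1 - t) = a ^ t * b ^ (1 - t) * s := by
  rw [Real.mul_rpow ha hs.le, Real.mul_rpow hb hs.le]
  calc _ = a ^ t * b ^ (1 - t) * (s ^ t * s ^ (1 - t)) := by ring
    _ = _ := by rw [← Real.rpow_add hs, add_sub_cancel, Real.rpow_one]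

def SatisfiesBrunnMinkowski {E : Type*} [AddCommGroup E] [Module ℝ E] [TopologicalSpace E]
    [MeasurableSpace E] (μ : Measure E) : Prop :=
  ∀ ⦃C D : Set E⦄, IsCompact C → IsCompact D → C.Nonempty → D.Nonempty →
    ∀ ⦃t : ℝ⦄, t ∈ Ioo (0 : ℝ) 1 → μ C ^ t * μ D ^ (1 - t) ≤ μ (t • C + (1 - t) • D)

theorem smul_slice_add_smul_slice_subset {R M N : Type*} [Semiring R] [AddCommMonoid M]
    [Module R M] [AddCommMonoid N] [Module R N] (r s : R) (A B : Set (M × N)) (x x' : M) :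
    r • {y | (x, y) ∈ A} + s • {y | (x', y) ∈ B} ⊆ {y | (r • x + s • x', y) ∈ r • A + s • B} := by
  rintro _ ⟨_, ⟨a, ha, rfl⟩, _, ⟨b, hb, rfl⟩, rfl⟩
  exact ⟨r • (x, a), smul_mem_smul_set ha, s • (x', b), smul_mem_smul_set hb, rfl⟩

theorem IsCompact.slice {X Y : Type*} [TopologicalSpace X] [TopologicalSpace Y] [T2Space X]
    [T2Space Y] {A : Set (X × Y)} (hA : IsCompact A) (x : X) : IsCompact {y | (x, y) ∈ A} :=
  (hA.image continuous_snd).of_isClosed_subset (hA.isClosed.preimage (.prodMk_right x))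
    fun y hy => ⟨(x, y), hy, rfl⟩

section Slices

variable {E : Type*} [NormedAddCommGroup E] [NormedSpace ℝ E] [MeasurableSpace E]
  {μ : Measure E} {A B : Set (ℝ × E)} {t : ℝ}

theorem superlevel_slice_add_subset (hμ : SatisfiesBrunnMinkowski μ) (hA : IsCompact A)
    (hB : IsCompact B) (ht : t ∈ Ioo (0 : ℝ) 1) {a b : ℝ} (ha : 0 ≤ a) (hb : 0 ≤ b) :
    t • {x | ENNReal.ofReal a < μ {y | (x, y) ∈ A}} +
        (1 - t) • {x | ENNReal.ofReal b < μ {y | (x, y) ∈ B}} ⊆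
      {x | ENNReal.ofReal (a ^ t * b ^ (1 - t)) < μ {y | (x, y) ∈ t • A + (1 - t) • B}} := by
  rintro _ ⟨_, ⟨x, hx, rfl⟩, _, ⟨x', hx', rfl⟩, rfl⟩
  have hAx : {y | (x, y) ∈ A}.Nonempty := nonempty_of_measure_ne_zero (ne_bot_of_gt hx)
  have hBx : {y | (x', y) ∈ B}.Nonempty := nonempty_of_measure_ne_zero (ne_bot_of_gt hx')
  calc ENNReal.ofReal (a ^ t * b ^ (1 - t))
      = ENNReal.ofReal a ^ t * ENNReal.ofReal b ^ (1 - t) := by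
        rw [ENNReal.ofReal_mul (by positivity), ENNReal.ofReal_rpow_of_nonneg ha ht.1.le,
          ENNReal.ofReal_rpow_of_nonneg hb (sub_nonneg.2 ht.2.le)]
    _ < μ {y | (x, y) ∈ A} ^ t * μ {y | (x', y) ∈ B} ^ (1 - t) :=
        ENNReal.mul_lt_mul (ENNReal.rpow_lt_rpow hx ht.1)
          (ENNReal.rpow_lt_rpow hx' (sub_pos.2 ht.2))
    _ ≤ μ (t • {y | (x, y) ∈ A} + (1 - t) • {y | (x', y) ∈ B}) :=
        hμ (hA.slice x) (hB.slice x') hAx hBx ht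
    _ ≤ _ := measure_mono (smul_slice_add_smul_slice_subset _ _ _ _ _ _)

theorem volume_superlevel_slice_add_le [BorelSpace E] [SFinite μ]
    (hμ : SatisfiesBrunnMinkowski μ) (hA : IsCompact A) (hB : IsCompact B)
    (ht : t ∈ Ioo (0 : ℝ) 1) {a b : ℝ} (ha : 0 ≤ a) (hb : 0 ≤ b)
    (hA₀ : {x | ENNReal.ofReal a < μ {y | (x, y) ∈ A}}.Nonempty)
    (hB₀ : {x | ENNReal.ofReal b < μ {y | (x, y) ∈ B}}.Nonempty) :
    ENNReal.ofReal t * volume {x | ENNReal.ofReal a < μ {y | (x, y) ∈ A}} +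
        ENNReal.ofReal (1 - t) * volume {x | ENNReal.ofReal b < μ {y | (x, y) ∈ B}} ≤
      volume {x | ENNReal.ofReal (a ^ t * b ^ (1 - t)) < μ {y | (x, y) ∈ t • A + (1 - t) • B}} := by
  have measurableSet_superlevel {K : Set (ℝ × E)} (hK : IsCompact K) (c : ℝ≥0∞) :
      MeasurableSet {x | c < μ {y | (x, y) ∈ K}} :=
    measurableSet_lt measurable_const (measurable_measure_prodMk_left hK.measurableSet)
  have volume_smul {r : ℝ} (hr : 0 ≤ r) (U : Set ℝ) :
      volume (r • U) = ENNReal.ofReal r * volume U := by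
    rw [Measure.addHaar_smul_of_nonneg volume hr, Module.finrank_self, pow_one]
  rw [← volume_smul ht.1.le, ← volume_smul (sub_nonneg.2 ht.2.le)]
  exact ((measurableSet_superlevel hA _).const_smul₀ t).volume_add_volume_le
    ((measurableSet_superlevel hB _).const_smul₀ _) hA₀.smul_set hB₀.smul_set |>.trans
    (measure_mono (superlevel_slice_add_subset hμ hA hB ht ha hb))

end Slices

theorem ENNReal.rpow_mul_rpow_le_add {a b : ℝ≥0∞} (ha : a ≠ ∞) (hb : b ≠ ∞) {t : ℝ}
    (ht₀ : 0 ≤ t) (ht₁ : t ≤ 1) :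
    a ^ t * b ^ (1 - t) ≤ ENNReal.ofReal t * a + ENNReal.ofReal (1 - t) * b := by
  lift a to NNReal using ha
  lift b to NNReal using hb
  lift t to NNReal using ht₀
  have h1t : ((1 - t : NNReal) : ℝ) = 1 - t := NNReal.coe_sub (by exact_mod_cast ht₁)
  rw [← h1t, ← ENNReal.coe_rpow_of_nonneg _ t.coe_nonneg,
    ← ENNReal.coe_rpow_of_nonneg _ (1 - t).coe_nonneg, ENNReal.ofReal_coe_nnreal,
    ENNReal.ofReal_coe_nnreal]
  exact_mod_cast NNReal.geom_mean_le_arith_mean2_weighted t (1 - t) a b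
    (add_tsub_cancel_of_le (by exact_mod_cast ht₁))

theorem lintegral_measure_ofReal_mul_lt {α : Type*} [MeasurableSpace α] (ν : Measure α)
    {f : α → ℝ≥0∞} (hf : Measurable f) (hf_top : ∀ x, f x ≠ ∞) {c : ℝ} (hc : 0 < c) :
    ∫⁻ s in Ioi 0, ν {x | ENNReal.ofReal (c * s) < f x} = ENNReal.ofReal c⁻¹ * ∫⁻ x, f x ∂ν := by
  have hlayer := lintegral_eq_lintegral_meas_lt ν (f := fun x => c⁻¹ * (f x).toReal)
    (ae_of_all _ fun x => by positivity) (hf.ennreal_toReal.const_mul _).aemeasurable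
  rw [← lintegral_const_mul' _ _ ENNReal.ofReal_ne_top]
  simp only [ENNReal.ofReal_mul (inv_nonneg.2 hc.le), ENNReal.ofReal_toReal (hf_top _)] at hlayer
  rw [hlayer]
  refine setLIntegral_congr_fun measurableSet_Ioi fun s hs => ?_
  congr 1
  ext x
  exact (ENNReal.ofReal_lt_iff_lt_toReal (mul_pos hc hs).le (hf_top x)).trans
    (lt_inv_mul_iff₀ hc).symm

section Product

variable {E : Type*} [NormedAddCommGroup E] [MeasurableSpace E] [BorelSpace E] {μ : Measure E}
  [SFinite μ]

theorem exists_iSup_measure_slice_eq_ofReal [IsFiniteMeasureOnCompacts μ] {C : Set (ℝ × E)}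
    (hC : IsCompact C) (hC₀ : (volume : Measure ℝ).prod μ C ≠ 0) :
    ∃ M : ℝ, 0 < M ∧ ⨆ x, μ {y | (x, y) ∈ C} = ENNReal.ofReal M := by
  have hfin : ⨆ x, μ {y | (x, y) ∈ C} ≠ ∞ :=
    ne_top_of_le_ne_top (hC.image continuous_snd).measure_lt_top.ne
      (iSup_le fun x => measure_mono fun y hy => ⟨(x, y), hy, rfl⟩)
  have hpos : ⨆ x, μ {y | (x, y) ∈ C} ≠ 0 := by
    rw [Ne, ENNReal.iSup_eq_zero]
    intro h
    apply hC₀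
    rw [Measure.prod_apply hC.measurableSet]
    exact (lintegral_congr h).trans lintegral_zero
  exact ⟨_, ENNReal.toReal_pos hpos hfin, (ENNReal.ofReal_toReal hfin).symm⟩

theorem volume_superlevel_slice_mul_add_le [NormedSpace ℝ E] (hμ : SatisfiesBrunnMinkowski μ)
    {C D : Set (ℝ × E)} (hC : IsCompact C) (hD : IsCompact D) {t : ℝ} (ht : t ∈ Ioo (0 : ℝ) 1)
    {M N : ℝ} (hM : 0 < M) (hN : 0 < N) (hCM : ⨆ x, μ {y | (x, y) ∈ C} = ENNReal.ofReal M)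
    (hDN : ⨆ x, μ {y | (x, y) ∈ D} = ENNReal.ofReal N) {s : ℝ} (hs : 0 < s) :
    ENNReal.ofReal t * volume {x | ENNReal.ofReal (M * s) < μ {y | (x, y) ∈ C}} +
        ENNReal.ofReal (1 - t) * volume {x | ENNReal.ofReal (N * s) < μ {y | (x, y) ∈ D}} ≤
      volume {x | ENNReal.ofReal (M ^ t * N ^ (1 - t) * s) <
        μ {y | (x, y) ∈ t • C + (1 - t) • D}} := by
  rcases lt_or_ge s 1 with hs1 | hs1
  · have hnonempty {K : Set (ℝ × E)} {L : ℝ} (hL : 0 < L)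
        (hKL : ⨆ x, μ {y | (x, y) ∈ K} = ENNReal.ofReal L) :
        {x | ENNReal.ofReal (L * s) < μ {y | (x, y) ∈ K}}.Nonempty :=
      let ⟨x, hx⟩ := lt_iSup_iff.1 <|
        hKL ▸ (ENNReal.ofReal_lt_ofReal_iff hL).2 (mul_lt_of_lt_one_right hL hs1)
      ⟨x, hx⟩
    rw [← Real.mul_rpow_mul_mul_rpow_one_sub hM.le hN.le hs]
    exact volume_superlevel_slice_add_le hμ hC hD ht (by positivity) (by positivity)
      (hnonempty hM hCM) (hnonempty hN hDN)
  · have hempty {K : Set (ℝ × E)} {L : ℝ} (hL : 0 ≤ L)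
        (hKL : ⨆ x, μ {y | (x, y) ∈ K} = ENNReal.ofReal L) :
        {x | ENNReal.ofReal (L * s) < μ {y | (x, y) ∈ K}} = ∅ :=
      eq_empty_of_forall_notMem fun x hx => hx.not_ge <| (le_iSup _ x).trans <|
        hKL ▸ ENNReal.ofReal_le_ofReal (le_mul_of_one_le_right hL hs1)
    simp [hempty hM.le hCM, hempty hN.le hDN]

theorem SatisfiesBrunnMinkowski.prod [NormedSpace ℝ E] [IsFiniteMeasureOnCompacts μ]
    (hμ : SatisfiesBrunnMinkowski μ) :
    SatisfiesBrunnMinkowski ((volume : Measure ℝ).prod μ) := by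
  intro C D hC hD _ _ t ht
  set ν := (volume : Measure ℝ).prod μ
  rcases eq_or_ne (ν C) 0 with hC₀ | hC₀
  · simp [hC₀, ENNReal.zero_rpow_of_pos ht.1]
  rcases eq_or_ne (ν D) 0 with hD₀ | hD₀
  · simp [hD₀, ENNReal.zero_rpow_of_pos (sub_pos.2 ht.2)]
  obtain ⟨M, hM, hCM⟩ := exists_iSup_measure_slice_eq_ofReal hC hC₀
  obtain ⟨N, hN, hDN⟩ := exists_iSup_measure_slice_eq_ofReal hD hD₀
  have hS : IsCompact (t • C + (1 - t) • D) := (hC.smul t).add (hD.smul _)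
  have hlayer {K : Set (ℝ × E)} (hK : IsCompact K) {L : ℝ} (hL : 0 < L) :
      ∫⁻ s in Ioi 0, volume {x | ENNReal.ofReal (L * s) < μ {y | (x, y) ∈ K}} =
        ENNReal.ofReal L⁻¹ * ν K := by
    rw [Measure.prod_apply hK.measurableSet]
    exact lintegral_measure_ofReal_mul_lt volume
      (measurable_measure_prodMk_left hK.measurableSet) (fun x => (hK.slice x).measure_lt_top.ne)
      hL
  have hint : ENNReal.ofReal t * (ENNReal.ofReal M⁻¹ * ν C) +
      ENNReal.ofReal (1 - t) * (ENNReal.ofReal N⁻¹ * ν D) ≤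
        ENNReal.ofReal (M ^ t * N ^ (1 - t))⁻¹ * ν (t • C + (1 - t) • D) := by
    rw [← hlayer hC hM, ← hlayer hD hN, ← hlayer hS (by positivity),
      ← lintegral_const_mul' _ _ ENNReal.ofReal_ne_top,
      ← lintegral_const_mul' _ _ ENNReal.ofReal_ne_top]
    exact (le_lintegral_add _ _).trans <| setLIntegral_mono' measurableSet_Ioi fun s hs =>
      volume_superlevel_slice_mul_add_le hμ hC hD ht hM hN hCM hDN hs
  have hscale : ENNReal.ofReal M⁻¹ ^ t * ENNReal.ofReal N⁻¹ ^ (1 - t) =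
      ENNReal.ofReal (M ^ t * N ^ (1 - t))⁻¹ := by
    rw [ENNReal.ofReal_rpow_of_nonneg (by positivity) ht.1.le,
      ENNReal.ofReal_rpow_of_nonneg (by positivity) (sub_nonneg.2 ht.2.le),
      ← ENNReal.ofReal_mul (by positivity), Real.inv_rpow hM.le, Real.inv_rpow hN.le, mul_inv]
  have hamgm := ENNReal.rpow_mul_rpow_le_add
    (ENNReal.mul_ne_top (ENNReal.ofReal_ne_top (r := M⁻¹)) (hC.measure_lt_top (μ := ν)).ne)
    (ENNReal.mul_ne_top (ENNReal.ofReal_ne_top (r := N⁻¹)) (hD.measure_lt_top (μ := ν)).ne)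
    ht.1.le ht.2.le
  rw [ENNReal.mul_rpow_of_nonneg _ _ ht.1.le,
    ENNReal.mul_rpow_of_nonneg _ _ (sub_nonneg.2 ht.2.le), mul_mul_mul_comm, hscale] at hamgm
  exact (ENNReal.mul_le_mul_iff_right (ENNReal.ofReal_pos.2 (by positivity)).ne'
    ENNReal.ofReal_ne_top).1 (hamgm.trans hint)

end Product

theorem SatisfiesBrunnMinkowski.of_subsingleton {E : Type*} [AddCommGroup E] [Module ℝ E]
    [TopologicalSpace E] [MeasurableSpace E] [Subsingleton E] (μ : Measure E) :
    SatisfiesBrunnMinkowski μ := by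
  intro C D _ _ hC hD t ht
  rw [(hC.smul_set.add hD.smul_set).eq_univ, hC.eq_univ, hD.eq_univ,
    ← ENNReal.rpow_add_of_nonneg _ _ ht.1.le (sub_nonneg.2 ht.2.le), add_sub_cancel,
    ENNReal.rpow_one]

theorem SatisfiesBrunnMinkowski.map_continuousLinearEquiv {E F : Type*} [NormedAddCommGroup E]
    [NormedSpace ℝ E] [MeasurableSpace E] [BorelSpace E] [NormedAddCommGroup F] [NormedSpace ℝ F]
    [MeasurableSpace F] [BorelSpace F] {μ : Measure E} {ν : Measure F}
    (hμ : SatisfiesBrunnMinkowski μ) (e : E ≃L[ℝ] F) (he : MeasurePreserving e μ ν) :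
    SatisfiesBrunnMinkowski ν := by
  intro C D hC hD hC₀ hD₀ t ht
  have hν {K : Set F} (hK : IsCompact K) : ν K = μ (e.symm '' K) := by
    rw [← he.measure_preimage hK.measurableSet.nullMeasurableSet, e.image_symm_eq_preimage]
  rw [hν hC, hν hD, hν ((hC.smul t).add (hD.smul _)), image_add, image_smul_set, image_smul_set]
  exact hμ (hC.image e.symm.continuous) (hD.image e.symm.continuous) (hC₀.image _) (hD₀.image _)
    ht

theorem measurePreserving_finConsEquivL (n : ℕ) :
    MeasurePreserving (Fin.consEquivL ℝ fun _ : Fin (n + 1) => ℝ) (volume.prod volume) volume := by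
  have h : ⇑(Fin.consEquivL ℝ fun _ : Fin (n + 1) => ℝ) =
      (MeasurableEquiv.piFinSuccAbove (fun _ => ℝ) 0).symm := by
    ext p : 1
    simp only [MeasurableEquiv.piFinSuccAbove_symm_apply, Fin.insertNthEquiv_zero]
    rfl
  rw [h]
  exact (volume_preserving_piFinSuccAbove (fun _ => ℝ) 0).symm

theorem satisfiesBrunnMinkowski_volume_pi :
    ∀ n : ℕ, SatisfiesBrunnMinkowski (volume : Measure (Fin n → ℝ))
  | 0 => .of_subsingleton volume
  | n + 1 => (satisfiesBrunnMinkowski_volume_pi n).prod.map_continuousLinearEquiv _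
      (measurePreserving_finConsEquivL n)

theorem stmt7 (n : ℕ) (A B : Set (ℝ × (Fin n → ℝ))) (t : ℝ) (ht : t ∈ Set.Ioo (0:ℝ) 1)
    (hA : IsCompact A) (hB : IsCompact B)
    (lam γ γt : ℝ) (hlam : 0 < lam) (hγ : 0 < γ) (hγt : 0 < γt)
    (hnorm : γ ^ t * γt ^ (1 - t) = 1)
    (hAne : {x : ℝ | ENNReal.ofReal (γ * lam) < volume {y | (x, y) ∈ A}}.Nonempty)
    (hBne : {x : ℝ | ENNReal.ofReal (γt * lam) < volume {y | (x, y) ∈ B}}.Nonempty) :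
    ENNReal.ofReal t * volume {x : ℝ | ENNReal.ofReal (γ * lam) < volume {y | (x, y) ∈ A}}
      + ENNReal.ofReal (1 - t) *
        volume {x : ℝ | ENNReal.ofReal (γt * lam) < volume {y | (x, y) ∈ B}}
    ≤ volume {x : ℝ | ENNReal.ofReal lam < volume {y | (x, y) ∈ t • A + (1 - t) • B}} := by
  have hlevel : (γ * lam) ^ t * (γt * lam) ^ (1 - t) = lam := by
    rw [Real.mul_rpow_mul_mul_rpow_one_sub hγ.le hγt.le hlam, hnorm, one_mul]
  simpa only [hlevel] using volume_superlevel_slice_add_le (satisfiesBrunnMinkowski_volume_pi n)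
    hA hB ht (by positivity) (by positivity) hAne hBne
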